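/- Let H = (V, E) be a finite hypergraph with source vertex s, let ě ∈ E, and let w, w' : E → ℝ≥0 be weight functions that agree on every hyperedge except ě, with w'(ě) ≤ w(ě) (a weight decrease). Let d[v] and d'[v] denote the shortest-hyperpath distances from s under w and w', respectively, and let x ∈ ě be a vertex attaining d[x] = min{d[v] : v ∈ ě}. Then d'[x] = d[x], and moreover d'[x] = min{d'[v] : v ∈ ě}. -/

import Mathlib

open scoped ENNReal NNReal

variable {V : Type*}

/-- A hyperpath from `u` to `v` in the hypergraph with hyperedge set `E`:
a nonempty list of hyperedges, the first containing `u`, the last containing `v`,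
with consecutive hyperedges intersecting. -/
def IsHyperpath [DecidableEq V] (E : Finset (Finset V)) (u v : V)
    (L : List (Finset V)) : Prop :=
  (∀ e ∈ L, e ∈ E) ∧ L.Chain' (fun a b => (a ∩ b).Nonempty) ∧
    ∃ h : L ≠ [], u ∈ L.head h ∧ v ∈ L.getLast h

/-- The weight of a hyperpath: the sum of the weights of its hyperedges. -/
def hweight (w : Finset V → ℝ≥0) (L : List (Finset V)) : ℝ≥0 :=
  (L.map w).sum

/-- Shortest-hyperpath distance from the source `s` to `v`: the minimum weight
of a hyperpath from `s` to `v` (`∞` when no hyperpath exists), with the source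
itself at distance `0`. -/
noncomputable def hdist [DecidableEq V] (E : Finset (Finset V))
    (w : Finset V → ℝ≥0) (s v : V) : ℝ≥0∞ :=
  if v = s then 0
  else ⨅ L : {L : List (Finset V) // IsHyperpath E s v L}, (hweight w L.1 : ℝ≥0∞)

/-!
Lowering the weight of `e₀` can only shorten hyperpaths that use `e₀`. Cut such a hyperpath
to a vertex of `e₀` just before its first occurrence of `e₀`: what remains avoids `e₀`, so it
has the same weight under `w` and `w'` and is a hyperpath to some vertex of `e₀`, hence weighs
at least `d[x]`. So no vertex of `e₀` gets closer than `d[x]` under `w'`, while `d' ≤ d`.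
-/

section Hyperpath

variable {E : Finset (Finset V)} {w w' : Finset V → ℝ≥0} {s v : V} {L : List (Finset V)}

lemma hweight_append (w : Finset V → ℝ≥0) (P S : List (Finset V)) :
    hweight w (P ++ S) = hweight w P + hweight w S := by
  simp [hweight]

lemma hweight_congr (h : ∀ e ∈ L, w' e = w e) : hweight w' L = hweight w L :=
  congrArg List.sum (List.map_congr_left h)

lemma hweight_mono (h : ∀ e ∈ L, w' e ≤ w e) : hweight w' L ≤ hweight w L :=
  List.sum_le_sum h

variable [DecidableEq V]

lemma hdist_self : hdist E w s s = 0 := by simp [hdist]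

lemma hdist_le_hweight (hL : IsHyperpath E s v L) : hdist E w s v ≤ hweight w L := by
  unfold hdist
  split_ifs
  · exact zero_le
  · exact iInf_le_of_le ⟨L, hL⟩ le_rfl

lemma le_hdist {c : ℝ≥0∞} (hs : v = s → c = 0)
    (h : ∀ L, IsHyperpath E s v L → c ≤ hweight w L) : c ≤ hdist E w s v := by
  unfold hdist
  split_ifs with hvs
  · exact (hs hvs).le
  · exact le_iInf fun L => h L.1 L.2

lemma hdist_mono (h : ∀ e ∈ E, w' e ≤ w e) : hdist E w' s v ≤ hdist E w s v :=
  le_hdist (fun hvs => hvs ▸ hdist_self) fun L hL =>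
    (hdist_le_hweight hL).trans (by exact_mod_cast hweight_mono fun e he => h e (hL.1 e he))

lemma IsHyperpath.exists_of_append_cons {P S : List (Finset V)} {e : Finset V}
    (hL : IsHyperpath E s v (P ++ e :: S)) : s ∈ e ∨ ∃ u ∈ e, IsHyperpath E s u P := by
  obtain ⟨hmem, hchain, hne, hhead, -⟩ := hL
  rcases eq_or_ne P [] with rfl | hP
  · exact Or.inl hhead
  · obtain ⟨u, hu⟩ : (P.getLast hP ∩ e).Nonempty :=
      hchain.rel_getLast_head_of_append hP (List.cons_ne_nil e S)
    obtain ⟨huP, hue⟩ := Finset.mem_inter.1 hu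
    refine Or.inr ⟨u, hue, fun f hf => hmem f (List.mem_append_left _ hf),
      hchain.left_of_append, hP, ?_, huP⟩
    rwa [List.head_append_of_ne_nil hP] at hhead

end Hyperpath

section WeightDecrease

variable [DecidableEq V] {E : Finset (Finset V)} {e₀ : Finset V} {w w' : Finset V → ℝ≥0}
  {s x : V}

lemma hdist_le_hweight_of_isMin (hagree : ∀ e ∈ E, e ≠ e₀ → w' e = w e)
    (hxmin : ∀ v ∈ e₀, hdist E w s x ≤ hdist E w s v) {v : V} (hv : v ∈ e₀)
    {L : List (Finset V)} (hL : IsHyperpath E s v L) : hdist E w s x ≤ hweight w' L := by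
  have hagree_off {P : List (Finset V)} (hPE : ∀ e ∈ P, e ∈ E) (hP : e₀ ∉ P) :
      hweight w' P = hweight w P :=
    hweight_congr fun e he => hagree e (hPE e he) (ne_of_mem_of_not_mem he hP)
  by_cases he₀L : e₀ ∈ L
  · obtain ⟨P, S, rfl, he₀P⟩ := List.eq_append_cons_of_mem he₀L
    rcases hL.exists_of_append_cons with hs | ⟨u, hu, hP⟩
    · have hx0 : hdist E w s x = 0 := by simpa [hdist_self] using hxmin s hs
      simp [hx0]
    · calc hdist E w s x ≤ hdist E w s u := hxmin u hu
        _ ≤ hweight w P := hdist_le_hweight hP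
        _ = hweight w' P := by rw [hagree_off hP.1 he₀P]
        _ ≤ hweight w' (P ++ e₀ :: S) := by
          rw [hweight_append]; exact_mod_cast le_self_add
  · calc hdist E w s x ≤ hdist E w s v := hxmin v hv
      _ ≤ hweight w L := hdist_le_hweight hL
      _ = hweight w' L := by rw [hagree_off hL.1 he₀L]

lemma hdist_le_hdist_of_isMin (hagree : ∀ e ∈ E, e ≠ e₀ → w' e = w e)
    (hxmin : ∀ v ∈ e₀, hdist E w s x ≤ hdist E w s v) {v : V} (hv : v ∈ e₀) :
    hdist E w s x ≤ hdist E w' s v :=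
  le_hdist (fun hvs => by simpa [hdist_self, hvs] using hxmin v hv)
    fun _ hL => hdist_le_hweight_of_isMin hagree hxmin hv hL

end WeightDecrease

theorem min_vertex_unaffected_of_weight_decrease_general [DecidableEq V]
    (E : Finset (Finset V))
    (e₀ : Finset V)
    (w w' : Finset V → ℝ≥0)
    (hagree : ∀ e ∈ E, e ≠ e₀ → w' e = w e)
    (hdec : w' e₀ ≤ w e₀) (s x : V) (hx : x ∈ e₀)
    (hxmin : ∀ v ∈ e₀, hdist E w s x ≤ hdist E w s v) :
    hdist E w' s x = hdist E w s x ∧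
      ∀ v ∈ e₀, hdist E w' s x ≤ hdist E w' s v := by
  have hdecrease : ∀ e ∈ E, w' e ≤ w e := fun e he => by
    by_cases h : e = e₀
    · exact h ▸ hdec
    · exact (hagree e he h).le
  have hx_eq : hdist E w' s x = hdist E w s x :=
    le_antisymm (hdist_mono hdecrease) (hdist_le_hdist_of_isMin hagree hxmin hx)
  exact ⟨hx_eq, fun v hv => hx_eq ▸ hdist_le_hdist_of_isMin hagree hxmin hv⟩

/-- Let the weight of the single hyperedge `e₀` decrease
(`w'(e₀) ≤ w(e₀)`, all other hyperedge weights unchanged) and let `x ∈ e₀`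
attain the minimum old distance `d[x] = min{d[v] : v ∈ e₀}` from the source
`s`. Then `d'[x] = d[x]`, and moreover `d'[x] = min{d'[v] : v ∈ e₀}`. -/
theorem min_vertex_unaffected_of_weight_decrease [Fintype V] [DecidableEq V]
    (E : Finset (Finset V)) (hE : ∀ e ∈ E, e.Nonempty)
    (hcover : ∀ x : V, ∃ e ∈ E, x ∈ e)
    (e₀ : Finset V) (he₀ : e₀ ∈ E)
    (w w' : Finset V → ℝ≥0)
    (hagree : ∀ e ∈ E, e ≠ e₀ → w' e = w e)
    (hdec : w' e₀ ≤ w e₀) (s x : V) (hx : x ∈ e₀)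
    (hxmin : ∀ v ∈ e₀, hdist E w s x ≤ hdist E w s v) :
    hdist E w' s x = hdist E w s x ∧
      ∀ v ∈ e₀, hdist E w' s x ≤ hdist E w' s v :=
  min_vertex_unaffected_of_weight_decrease_general E e₀ w w' hagree hdec s x hx hxmin
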